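/- For a connected (m+1)-uniform undirected hypergraph G with sparsity s and vertex connectivity v(G), the algebraic connectivity satisfies a(G) ≤ (2m−1)·s·v(G). -/

import Mathlib

open Finset

/-- `∑_{i<j, v_i,v_j ∈ e} (x_i - x_j)^2`, the Laplacian quadratic form of a single hyperedge. -/
def pairSum {n : ℕ} (e : Finset (Fin n)) (x : Fin n → ℝ) : ℝ :=
  ∑ i ∈ e, ∑ j ∈ e, if i < j then (x i - x j)^2 else 0

/-- The Laplacian quadratic form `x^T L x = ∑_{E ∈ Es} ∑_{i<j ∈ E} (x_i - x_j)^2`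
of a uniform undirected hypergraph under the compatible tensor product. -/
def Qform {n : ℕ} (Es : Finset (Finset (Fin n))) (x : Fin n → ℝ) : ℝ :=
  ∑ e ∈ Es, pairSum e x

/-- Algebraic connectivity of a hypergraph on the vertex set `V`:
`a(G) = min { x^T L x : x ⊥ 1, ‖x‖₂ = 1 }`, the vectors being supported on `V`. -/
noncomputable def algConOn {n : ℕ} (V : Finset (Fin n))
    (Es : Finset (Finset (Fin n))) : ℝ :=
  sInf {y : ℝ | ∃ x : Fin n → ℝ, (∀ i ∉ V, x i = 0) ∧ (∑ i ∈ V, x i = 0) ∧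
    (∑ i ∈ V, (x i)^2 = 1) ∧ y = Qform Es x}

/-- Connectivity of the hypergraph on the whole vertex set. -/
def HConnected {n : ℕ} (Es : Finset (Finset (Fin n))) : Prop :=
  ∀ u v : Fin n, Relation.ReflTransGen (fun a b => ∃ e ∈ Es, a ∈ e ∧ b ∈ e) u v

/-- `S` is a cutset: after removing the vertices of `S` and all hyperedges meeting `S`,
some two remaining vertices are no longer joined by a hyperpath. -/
def IsCutset {n : ℕ} (Es : Finset (Finset (Fin n))) (S : Finset (Fin n)) : Prop :=
  ∃ u v : Fin n, u ∉ S ∧ v ∉ S ∧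
    ¬ Relation.ReflTransGen
        (fun a b => a ∉ S ∧ b ∉ S ∧ ∃ e ∈ Es, e ∩ S = ∅ ∧ a ∈ e ∧ b ∈ e) u v

/-! Take a minimum cutset `S` and a vertex `u ∉ S` from which some vertex outside `S` cannot be
reached in `G - S`. Let `A` be the component of `u` in `G - S` and `B` the remaining vertices
outside `S`. The vector equal to `|B|` on `A`, `-|A|` on `B` and `0` on `S`, normalized, is
orthogonal to `1`. Hyperedges avoiding `S` lie inside `A` or inside `B` and contribute nothing to
the quadratic form, while a hyperedge meeting `S` in `p ≥ 1` vertices contributes at most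
`(2m - 1) p` times the squared mass of `x` on its other vertices. Summing over hyperedges, every
pair `i ∈ S`, `j ∉ S` is counted at most `s` times, so `xᵀ L x ≤ (2m - 1) s |S|`. -/

lemma two_mul_pairSum {n : ℕ} (e : Finset (Fin n)) (x : Fin n → ℝ) :
    2 * pairSum e x = ∑ i ∈ e, ∑ j ∈ e, (x i - x j) ^ 2 := by
  have split (i j : Fin n) : (x i - x j) ^ 2 =
      (if i < j then (x i - x j) ^ 2 else 0) + (if j < i then (x j - x i) ^ 2 else 0) := by
    rcases lt_trichotomy i j with h | rfl | h
    · simp [h, h.asymm]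
    · simp
    · simp [h, h.asymm, sub_sq_comm (x i)]
  rw [sum_congr rfl fun i _ => sum_congr rfl fun j _ => split i j]
  simp only [sum_add_distrib]
  rw [sum_comm (f := fun i j => if j < i then (x j - x i) ^ 2 else 0)]
  unfold pairSum
  ring

lemma pairSum_nonneg {n : ℕ} (e : Finset (Fin n)) (x : Fin n → ℝ) : 0 ≤ pairSum e x := by
  have := two_mul_pairSum e x
  have : 0 ≤ ∑ i ∈ e, ∑ j ∈ e, (x i - x j) ^ 2 := by positivity
  linarith

theorem pairSum_eq {n : ℕ} (e : Finset (Fin n)) (x : Fin n → ℝ) :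
    pairSum e x = #e * ∑ i ∈ e, x i ^ 2 - (∑ i ∈ e, x i) ^ 2 := by
  have h := two_mul_pairSum e x
  simp only [sub_sq, sum_add_distrib, sum_sub_distrib, sum_const, nsmul_eq_mul, ← mul_sum,
    ← sum_mul] at h
  linear_combination h / 2

lemma pairSum_eq_zero_of_forall_eq {n : ℕ} {e : Finset (Fin n)} {x : Fin n → ℝ}
    (h : ∀ i ∈ e, ∀ j ∈ e, x i = x j) : pairSum e x = 0 :=
  sum_eq_zero fun i hi => sum_eq_zero fun j hj => by simp [h i hi j hj]

lemma sq_sum_eq_sum_sq_of_card_le_one {α : Type*} {s : Finset α} (hs : #s ≤ 1) (f : α → ℝ) :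
    (∑ i ∈ s, f i) ^ 2 = ∑ i ∈ s, f i ^ 2 := by
  rcases Nat.le_one_iff_eq_zero_or_eq_one.mp hs with h | h
  · simp [card_eq_zero.mp h]
  · obtain ⟨a, rfl⟩ := card_eq_one.mp h
    simp

theorem pairSum_le_of_eq_zero_on {n m : ℕ} (hm : 1 ≤ m) {e S : Finset (Fin n)}
    (he : #e = m + 1) (hp : (e ∩ S).Nonempty) {x : Fin n → ℝ} (hxS : ∀ i ∈ S, x i = 0) :
    pairSum e x ≤ (2 * m - 1) * #(e ∩ S) * ∑ j ∈ e \ S, x j ^ 2 := by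
  have restrict (f : Fin n → ℝ) (hf : ∀ i ∈ S, f i = 0) : ∑ i ∈ e, f i = ∑ j ∈ e \ S, f j := by
    rw [← sum_inter_add_sum_sdiff e S f, sum_eq_zero fun i hi => hf i (mem_inter.1 hi).2,
      zero_add]
  rw [pairSum_eq, restrict x hxS, restrict (x · ^ 2) (by simp +contextual [hxS]), he]
  have hcard : #(e ∩ S) + #(e \ S) = m + 1 := he ▸ card_inter_add_card_sdiff e S
  have hp1 : (1 : ℝ) ≤ #(e ∩ S) := by exact_mod_cast hp.card_pos
  have hmR : (1 : ℝ) ≤ m := by exact_mod_cast hm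
  have hQ : 0 ≤ ∑ j ∈ e \ S, x j ^ 2 := sum_nonneg fun j _ => sq_nonneg _
  push_cast
  rcases le_or_gt #(e \ S) 1 with ht | ht
  · rw [sq_sum_eq_sum_sq_of_card_le_one ht]
    have : (m : ℝ) ≤ (2 * m - 1) * #(e ∩ S) := by nlinarith
    nlinarith
  · have : (m : ℝ) + 1 ≤ (2 * m - 1) * #(e ∩ S) := by
      have : (2 : ℝ) ≤ m := by have := hp.card_pos; exact_mod_cast (by omega : 2 ≤ m)
      nlinarith
    nlinarith [sq_nonneg (∑ j ∈ e \ S, x j)]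

lemma Qform_nonneg {n : ℕ} (Es : Finset (Finset (Fin n))) (x : Fin n → ℝ) : 0 ≤ Qform Es x :=
  sum_nonneg fun e _ => pairSum_nonneg e x

lemma algConOn_univ_le {n : ℕ} (Es : Finset (Finset (Fin n))) {x : Fin n → ℝ}
    (h0 : ∑ i, x i = 0) (h1 : ∑ i, x i ^ 2 = 1) : algConOn univ Es ≤ Qform Es x :=
  csInf_le ⟨0, by rintro _ ⟨y, -, -, -, rfl⟩; exact Qform_nonneg Es y⟩ ⟨x, by simp, h0, h1, rfl⟩

section

variable {α : Type*} [Fintype α] [DecidableEq α]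

lemma card_inter_mul_sum_sdiff_eq (e S : Finset α) (f : α → ℝ) :
    (#(e ∩ S) : ℝ) * ∑ j ∈ e \ S, f j = ∑ i ∈ S, ∑ j ∈ Sᶜ, if i ∈ e ∧ j ∈ e then f j else 0 := by
  have hS : (#(e ∩ S) : ℝ) = ∑ i ∈ S, if i ∈ e then 1 else 0 := by
    rw [sum_boole, filter_mem_eq_inter, inter_comm]
  have hSc : ∑ j ∈ e \ S, f j = ∑ j ∈ Sᶜ, if j ∈ e then f j else 0 := by
    rw [sum_ite_mem, sdiff_eq_inter_compl, inter_comm]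
  rw [hS, hSc, sum_mul_sum]
  simp only [ite_and, ite_mul, one_mul, zero_mul]

theorem sum_card_inter_mul_sum_sdiff_le {Es : Finset (Finset α)} {s : ℕ}
    (hs : ∀ i j : α, i ≠ j → #{e ∈ Es | i ∈ e ∧ j ∈ e} ≤ s) (S : Finset α) {f : α → ℝ}
    (hf : ∀ i, 0 ≤ f i) :
    ∑ e ∈ Es, (#(e ∩ S) : ℝ) * ∑ j ∈ e \ S, f j ≤ s * #S * ∑ j ∈ Sᶜ, f j := by
  calc ∑ e ∈ Es, (#(e ∩ S) : ℝ) * ∑ j ∈ e \ S, f j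
      = ∑ i ∈ S, ∑ j ∈ Sᶜ, (#{e ∈ Es | i ∈ e ∧ j ∈ e} : ℝ) * f j := by
        rw [sum_congr rfl fun e _ => card_inter_mul_sum_sdiff_eq e S f, sum_comm]
        refine sum_congr rfl fun i _ => ?_
        rw [sum_comm]
        refine sum_congr rfl fun j _ => ?_
        rw [← sum_filter, sum_const, nsmul_eq_mul]
    _ ≤ ∑ i ∈ S, ∑ j ∈ Sᶜ, (s : ℝ) * f j := by
        gcongr with i hi j hj
        · exact hf j
        · exact hs i j fun h => (mem_compl.1 hj) (h ▸ hi)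
    _ = s * #S * ∑ j ∈ Sᶜ, f j := by
        simp only [sum_const, nsmul_eq_mul, ← mul_sum]
        ring

lemma sum_eq_of_eqOn_of_disjoint {A B : Finset α} (hAB : Disjoint A B) {f : α → ℝ} {p q : ℝ}
    (hA : ∀ i ∈ A, f i = p) (hB : ∀ i ∈ B, f i = q)
    (h0 : ∀ i, i ∉ A → i ∉ B → f i = 0) : ∑ i, f i = #A * p + #B * q := by
  rw [← sum_subset (subset_univ (A ∪ B)) fun i _ hi => h0 i (by simp_all) (by simp_all),
    sum_union hAB, sum_congr rfl hA, sum_congr rfl hB]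
  simp

theorem exists_sum_eq_zero_sum_sq_eq_one {A B : Finset α} (hAB : Disjoint A B) (hA : A.Nonempty)
    (hB : B.Nonempty) :
    ∃ x : α → ℝ, (∀ i ∈ A, ∀ j ∈ A, x i = x j) ∧ (∀ i ∈ B, ∀ j ∈ B, x i = x j) ∧
      (∀ i, i ∉ A → i ∉ B → x i = 0) ∧ ∑ i, x i = 0 ∧ ∑ i, x i ^ 2 = 1 := by
  set a : ℝ := (#A : ℝ)
  set b : ℝ := (#B : ℝ)
  have ha : 0 < a := by simpa [a] using hA.card_pos
  have hb : 0 < b := by simpa [b] using hB.card_pos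
  set c := √(a * b * (a + b))
  have hc : c ^ 2 = a * b * (a + b) := Real.sq_sqrt (by positivity)
  have hc0 : c ≠ 0 := by positivity
  let x (i : α) : ℝ := if i ∈ A then b / c else if i ∈ B then -a / c else 0
  have hxA : ∀ i ∈ A, x i = b / c := fun i hi => if_pos hi
  have hxB : ∀ i ∈ B, x i = -a / c := fun i hi => by
    simp [x, hi, disjoint_right.1 hAB hi]
  have hx0 : ∀ i, i ∉ A → i ∉ B → x i = 0 := fun i hiA hiB => by simp [x, hiA, hiB]
  refine ⟨x, fun i hi j hj => by rw [hxA i hi, hxA j hj],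
    fun i hi j hj => by rw [hxB i hi, hxB j hj], hx0, ?_, ?_⟩
  · rw [sum_eq_of_eqOn_of_disjoint hAB hxA hxB hx0]
    ring
  · rw [sum_eq_of_eqOn_of_disjoint hAB (fun i hi => by rw [hxA i hi])
      (fun i hi => by rw [hxB i hi]) (fun i hiA hiB => by simp [hx0 i hiA hiB])]
    field_simp
    linear_combination -hc

end

theorem IsCutset.exists_test_vector {n : ℕ} {Es : Finset (Finset (Fin n))}
    {S : Finset (Fin n)} (h : IsCutset Es S) :
    ∃ x : Fin n → ℝ, (∀ i ∈ S, x i = 0) ∧ (∀ e ∈ Es, e ∩ S = ∅ → ∀ i ∈ e, ∀ j ∈ e, x i = x j) ∧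
      ∑ i, x i = 0 ∧ ∑ i, x i ^ 2 = 1 := by
  classical
  obtain ⟨u, w, huS, hwS, huw⟩ := h
  set R := fun a b => a ∉ S ∧ b ∉ S ∧ ∃ e ∈ Es, e ∩ S = ∅ ∧ a ∈ e ∧ b ∈ e
  set A : Finset (Fin n) := {i | Relation.ReflTransGen R u i}
  set B := Sᶜ \ A
  have hAS : ∀ i ∈ A, i ∉ S := fun i hi => by
    rcases (mem_filter.1 hi).2.cases_tail with rfl | ⟨_, _, hR⟩
    exacts [huS, hR.2.1]
  have hBS : ∀ i ∈ B, i ∉ S := fun i hi => mem_compl.1 (mem_sdiff.1 hi).1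
  have hclosed : ∀ e ∈ Es, e ∩ S = ∅ → ∀ i ∈ e, ∀ j ∈ e, i ∈ A → j ∈ A := by
    intro e he hES i hi j hj hiA
    have hdisj := disjoint_iff_inter_eq_empty.2 hES
    exact mem_filter.2 ⟨mem_univ j, (mem_filter.1 hiA).2.tail
      ⟨disjoint_left.1 hdisj hi, disjoint_left.1 hdisj hj, e, he, hES, hi, hj⟩⟩
  obtain ⟨x, hxA, hxB, hx0, hsum, hsq⟩ := exists_sum_eq_zero_sum_sq_eq_one (B := B)
    disjoint_sdiff ⟨u, mem_filter.2 ⟨mem_univ u, .refl⟩⟩ ⟨w, by simpa [B, A, hwS] using huw⟩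
  refine ⟨x, fun i hi => hx0 i (fun h => hAS i h hi) (fun h => hBS i h hi), ?_, hsum, hsq⟩
  intro e he hES i hi j hj
  by_cases hiA : i ∈ A
  · exact hxA i hiA j (hclosed e he hES i hi j hj hiA)
  · have hjA : j ∉ A := fun hjA => hiA (hclosed e he hES j hj i hi hjA)
    have hnS := disjoint_left.1 (disjoint_iff_inter_eq_empty.2 hES)
    exact hxB i (by simp [B, hnS hi, hiA]) j (by simp [B, hnS hj, hjA])

theorem Qform_le_of_eq_zero_on {n m s : ℕ} {Es : Finset (Finset (Fin n))} {S : Finset (Fin n)}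
    (hm : 1 ≤ m) (hU : ∀ e ∈ Es, #e = m + 1)
    (hs : ∀ i j : Fin n, i ≠ j → #{e ∈ Es | i ∈ e ∧ j ∈ e} ≤ s) {x : Fin n → ℝ}
    (hxS : ∀ i ∈ S, x i = 0) (hconst : ∀ e ∈ Es, e ∩ S = ∅ → ∀ i ∈ e, ∀ j ∈ e, x i = x j)
    (hx : ∑ i, x i ^ 2 = 1) :
    Qform Es x ≤ (2 * m - 1) * s * #S := by
  have hedge : ∀ e ∈ Es, pairSum e x ≤ (2 * m - 1) * #(e ∩ S) * ∑ j ∈ e \ S, x j ^ 2 := by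
    intro e he
    rcases (e ∩ S).eq_empty_or_nonempty with hES | hES
    · simp [pairSum_eq_zero_of_forall_eq (hconst e he hES), hES]
    · exact pairSum_le_of_eq_zero_on hm (hU e he) hES hxS
  have hm' : (0 : ℝ) ≤ 2 * m - 1 := by
    have : (1 : ℝ) ≤ m := by exact_mod_cast hm
    linarith
  have hcompl : ∑ j ∈ Sᶜ, x j ^ 2 ≤ 1 :=
    hx ▸ sum_le_sum_of_subset_of_nonneg (subset_univ _) fun j _ _ => sq_nonneg _
  calc Qform Es x ≤ ∑ e ∈ Es, (2 * m - 1) * #(e ∩ S) * ∑ j ∈ e \ S, x j ^ 2 :=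
        sum_le_sum hedge
    _ = (2 * m - 1) * ∑ e ∈ Es, (#(e ∩ S) : ℝ) * ∑ j ∈ e \ S, x j ^ 2 := by
        simp only [mul_sum, mul_assoc]
    _ ≤ (2 * m - 1) * (s * #S * ∑ j ∈ Sᶜ, x j ^ 2) := by
        gcongr
        exact sum_card_inter_mul_sum_sdiff_le hs S fun i => sq_nonneg (x i)
    _ ≤ (2 * m - 1) * (s * #S * 1) := by gcongr
    _ = (2 * m - 1) * s * #S := by ring

lemma HConnected.eq_of_card_le_one {n : ℕ} {Es : Finset (Finset (Fin n))} (hconn : HConnected Es)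
    (hE : ∀ e ∈ Es, #e ≤ 1) (u w : Fin n) : u = w := by
  induction hconn u w with
  | refl => rfl
  | tail _ hab ih =>
    obtain ⟨e, he, ha, hb⟩ := hab
    exact ih.trans (card_le_one.1 (hE e he) _ ha _ hb)

/-- For a connected (m+1)-uniform hypergraph `G` with sparsity `s` and vertex connectivity
`v(G)` (the least cardinality of a cutset), `a(G) ≤ (2m-1)·s·v(G)`. -/
theorem stmt8 {n m s v : ℕ} (Es : Finset (Finset (Fin n)))
    (hU : ∀ e ∈ Es, e.card = m + 1) (hconn : HConnected Es)
    (hs : ∀ i j : Fin n, i ≠ j → (Es.filter (fun e => i ∈ e ∧ j ∈ e)).card ≤ s)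
    (hv : IsLeast {k : ℕ | ∃ S : Finset (Fin n), S.card = k ∧ IsCutset Es S} v) :
    algConOn Finset.univ Es ≤ (2 * (m : ℝ) - 1) * s * v := by
  obtain ⟨⟨S, rfl, hS⟩, -⟩ := hv
  rcases Nat.eq_zero_or_pos m with rfl | hm
  · obtain ⟨u, w, -, -, huw⟩ := hS
    exact absurd (hconn.eq_of_card_le_one (fun e he => (hU e he).le) u w ▸ .refl) huw
  obtain ⟨x, hxS, hconst, hx0, hx1⟩ := hS.exists_test_vector
  calc algConOn univ Es ≤ Qform Es x := algConOn_univ_le Es hx0 hx1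
    _ ≤ (2 * m - 1) * s * #S := Qform_le_of_eq_zero_on hm hU hs hxS hconst hx1
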